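/- arXiv:1904.04897 — 2 statements merged into one kernel-verified Lean document; each statement's English description precedes it below -/
import Mathlib

section
/- Let η : ℤ² → A whose range is A (|A| ≥ 2) and suppose there exists a nonempty finite convex set U ⊂ ℤ² with P_η(U) ≤ (1/2)|U| + |A| - 1. Then any convex set S ⊆ U minimal among convex T ⊆ U satisfying P_η(T) ≤ (1/2)|T| + |A| - 1 exists, has at least two points, and is an η-generating set. Moreover, if η is aperiodic, the convex hull of S has positive area. -/
/-- The number of distinct `S`-patterns of a configuration `η : ℤ² → A`. -/
noncomputable def patternCount {A : Type*} (η : ℤ × ℤ → A) (S : Finset (ℤ × ℤ)) : ℕ :=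
  Set.ncard {w : (↥S) → A | ∃ u : ℤ × ℤ, ∀ s : ↥S, w s = η (u + (s : ℤ × ℤ))}

/-- The canonical embedding of the lattice `ℤ²` into `ℝ²`. -/
def emb (g : ℤ × ℤ) : ℝ × ℝ := ((g.1 : ℝ), (g.2 : ℝ))

/-- A finite subset of `ℤ²` is (lattice) convex if it contains every lattice point of its
real convex hull. -/
def IsLatticeConvex (S : Finset (ℤ × ℤ)) : Prop :=
  ∀ g : ℤ × ℤ, emb g ∈ convexHull ℝ (emb '' (S : Set (ℤ × ℤ))) → g ∈ S

/-!
Take `S` of minimum cardinality among the convex `T ⊆ U` with `P_η(T) ≤ |T|/2 + |A| - 1`.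
A single point carries `|A|` patterns, which is too many. If deleting a vertex `g` keeps `S`
convex, `S \ {g}` violates the bound, so `P_η(S \ {g}) > P_η(S) - 1/2`, and monotonicity
forces equality.

If `S` were collinear, convexity would make it an arithmetic progression `a + t • e`,
`0 ≤ t < n`, with at most `n + |A| - 2` patterns. Then the number of length-`k` words of `η`
along `e` cannot grow at every step `k < n`; where it stalls, each `k`-window determines the
next symbol, so translation by `e` permutes the finite set of `k`-windows, and the order `N` of
that permutation makes `N • e` a period of `η`.
-/

open Function

section Patterns

variable {A ι κ : Type*} (η : ℤ × ℤ → A)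

def pattern (v : ι → ℤ × ℤ) (u : ℤ × ℤ) : ι → A := fun i => η (u + v i)

noncomputable def shapeCount (v : ι → ℤ × ℤ) : ℕ := (Set.range (pattern η v)).ncard

lemma range_pattern_comp (v : ι → ℤ × ℤ) (σ : κ → ι) :
    Set.range (pattern η (v ∘ σ)) = (· ∘ σ) '' Set.range (pattern η v) :=
  Set.range_comp (· ∘ σ) (pattern η v)

lemma pattern_const_add (c : ℤ × ℤ) (v : ι → ℤ × ℤ) (u : ℤ × ℤ) :
    pattern η (fun i => c + v i) u = pattern η v (u + c) := by
  ext i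
  simp only [pattern, add_assoc]

lemma shapeCount_const_add (c : ℤ × ℤ) (v : ι → ℤ × ℤ) :
    shapeCount η (fun i => c + v i) = shapeCount η v := by
  have h : pattern η (fun i => c + v i) = pattern η v ∘ (· + c) :=
    funext (pattern_const_add η c v)
  rw [shapeCount, shapeCount, h, (add_right_surjective c).range_comp]

lemma shapeCount_of_unique [Fintype A] [Unique ι] (hη : Surjective η) (v : ι → ℤ × ℤ) :
    shapeCount η v = Fintype.card A := by
  have h : Set.range (pattern η v) = Set.univ := by
    refine Set.eq_univ_of_forall fun w => ?_
    obtain ⟨u, hu⟩ := hη (w default)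
    refine ⟨u - v default, funext fun i => ?_⟩
    rw [Unique.eq_default i]
    simp [pattern, hu]
  rw [shapeCount, h, Set.ncard_univ, Nat.card_congr (Equiv.funUnique ι A),
    Nat.card_eq_fintype_card]

variable [Finite A] [Finite ι]

lemma shapeCount_comp_le (v : ι → ℤ × ℤ) (σ : κ → ι) :
    shapeCount η (v ∘ σ) ≤ shapeCount η v := by
  rw [shapeCount, range_pattern_comp]
  exact Set.ncard_image_le (Set.toFinite _)

lemma pattern_eq_of_shapeCount_comp_eq {v : ι → ℤ × ℤ} {σ : κ → ι}
    (h : shapeCount η (v ∘ σ) = shapeCount η v) {u u' : ℤ × ℤ}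
    (huu' : pattern η (v ∘ σ) u = pattern η (v ∘ σ) u') :
    pattern η v u = pattern η v u' := by
  have hinj : Set.InjOn (· ∘ σ) (Set.range (pattern η v)) :=
    Set.injOn_of_ncard_image_eq (by rw [← range_pattern_comp]; exact h)
  exact hinj (Set.mem_range_self u) (Set.mem_range_self u') huu'

end Patterns

section PatternCount

variable {A : Type*} (η : ℤ × ℤ → A)

lemma patternCount_eq_shapeCount (S : Finset (ℤ × ℤ)) :
    patternCount η S = shapeCount η (fun s : S => (s : ℤ × ℤ)) := by
  rw [patternCount, shapeCount]
  congr 1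
  ext w
  simp [pattern, funext_iff, eq_comm]

lemma patternCount_mono [Finite A] {S T : Finset (ℤ × ℤ)} (h : T ⊆ S) :
    patternCount η T ≤ patternCount η S := by
  rw [patternCount_eq_shapeCount, patternCount_eq_shapeCount]
  exact shapeCount_comp_le η (fun s : S => (s : ℤ × ℤ)) fun t : T => ⟨t, h t.2⟩

lemma patternCount_singleton [Fintype A] (hη : Surjective η) (g : ℤ × ℤ) :
    patternCount η {g} = Fintype.card A := by
  rw [patternCount_eq_shapeCount, shapeCount_of_unique η hη]

end PatternCount

lemma exists_iterate_eq_of_finite_factor {X β : Type*} [Finite β] {W : X → β} {T : X → X}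
    (hT : Surjective T) (hW : ∀ x y, W x = W y → W (T x) = W (T y)) :
    ∃ N, 0 < N ∧ ∀ x, W (T^[N] x) = W x := by
  -- `T` descends to a surjection, hence a permutation, of the finite set `range W`.
  let F : Set.range W → Set.range W := fun w => ⟨W (T w.2.choose), Set.mem_range_self _⟩
  have hF : Semiconj (Set.rangeFactorization W) T F := fun x =>
    Subtype.ext (hW _ _ (Set.mem_range.1 (Set.mem_range_self (f := W) x)).choose_spec).symm
  have hsurj : Surjective F := by
    rintro ⟨_, y, rfl⟩
    obtain ⟨x, rfl⟩ := hT y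
    exact ⟨_, (hF x).symm⟩
  let σ := Equiv.ofBijective F ⟨Finite.injective_iff_surjective.2 hsurj, hsurj⟩
  refine ⟨orderOf σ, orderOf_pos σ, fun x => ?_⟩
  have h := (hF.iterate_right (orderOf σ) x).trans (congrFun (Equiv.Perm.coe_pow σ _).symm _)
  rw [pow_orderOf_eq_one] at h
  exact congrArg Subtype.val h

section Direction

variable {A : Type*} (η : ℤ × ℤ → A) (d : ℤ × ℤ)

def progression (k : ℕ) : Fin k → ℤ × ℤ := fun i => (i : ℤ) • d

lemma progression_comp_castSucc (k : ℕ) :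
    progression d (k + 1) ∘ Fin.castSucc = progression d k :=
  rfl

lemma progression_comp_succ (k : ℕ) :
    progression d (k + 1) ∘ Fin.succ = fun i => d + progression d k i := by
  ext i <;> simp [progression, add_smul, add_comm]

variable [Fintype A]

lemma exists_shapeCount_progression_succ_eq (hη : Surjective η) {n : ℕ} (hn : 1 ≤ n)
    (h : shapeCount η (progression d n) + 2 ≤ n + Fintype.card A) :
    ∃ k, 1 ≤ k ∧ shapeCount η (progression d (k + 1)) = shapeCount η (progression d k) := by
  by_contra! hne
  have hgrow : ∀ j, Fintype.card A + j ≤ shapeCount η (progression d (j + 1)) := by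
    intro j
    induction j with
    | zero => simp [shapeCount_of_unique η hη]
    | succ j ih =>
      have hlt := (shapeCount_comp_le η (progression d (j + 1 + 1)) Fin.castSucc).lt_of_ne
        (hne (j + 1) (by omega)).symm
      rw [progression_comp_castSucc] at hlt
      omega
  have := hgrow (n - 1)
  rw [Nat.sub_add_cancel hn] at this
  omega

lemma pattern_progression_add_eq {k : ℕ}
    (heq : shapeCount η (progression d (k + 1)) = shapeCount η (progression d k))
    {u v : ℤ × ℤ} (huv : pattern η (progression d k) u = pattern η (progression d k) v) :
    pattern η (progression d k) (u + d) = pattern η (progression d k) (v + d) := by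
  have h := pattern_eq_of_shapeCount_comp_eq η (v := progression d (k + 1)) (σ := Fin.castSucc)
    heq.symm huv
  rw [← pattern_const_add, ← pattern_const_add, ← progression_comp_succ]
  exact congrArg (· ∘ Fin.succ) h

theorem exists_periodic_of_shapeCount_progression_le (hη : Surjective η) (hd : d ≠ 0) {n : ℕ}
    (hn : 1 ≤ n) (h : shapeCount η (progression d n) + 2 ≤ n + Fintype.card A) :
    ∃ p ≠ 0, Periodic η p := by
  obtain ⟨k, hk, heq⟩ := exists_shapeCount_progression_succ_eq η d hη hn h
  obtain ⟨N, hN, hper⟩ := exists_iterate_eq_of_finite_factor (add_right_surjective d)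
    fun u v => pattern_progression_add_eq η d heq (u := u) (v := v)
  refine ⟨N • d, smul_ne_zero hN.ne' hd, fun g => ?_⟩
  simpa [pattern, progression, add_right_iterate] using congrFun (hper g) ⟨0, hk⟩

end Direction

lemma exists_eq_zsmul_of_mul_eq_mul {e x : ℤ × ℤ} (he : IsCoprime e.1 e.2)
    (h : x.1 * e.2 = x.2 * e.1) : ∃ t : ℤ, x = t • e := by
  obtain ⟨a, b, hab⟩ := he
  refine ⟨a * x.1 + b * x.2, Prod.ext ?_ ?_⟩
  · simp only [Prod.smul_fst, smul_eq_mul]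
    linear_combination (-x.1) * hab + b * h
  · simp only [Prod.smul_snd, smul_eq_mul]
    linear_combination (-x.2) * hab - a * h

lemma exists_forall_eq_add_zsmul_of_collinear {S : Set (ℤ × ℤ)} (hcol : Collinear ℝ (emb '' S))
    {p q : ℤ × ℤ} (hp : p ∈ S) (hq : q ∈ S) (hpq : p ≠ q) :
    ∃ e : ℤ × ℤ, e ≠ 0 ∧ ∀ s ∈ S, ∃ t : ℤ, s = p + t • e := by
  obtain ⟨v, hv⟩ := (collinear_iff_of_mem (Set.mem_image_of_mem emb hp)).1 hcol
  have hcross : ∀ s ∈ S, (s - p).1 * (q - p).2 = (s - p).2 * (q - p).1 := by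
    intro s hs
    obtain ⟨r, hr⟩ := hv _ (Set.mem_image_of_mem emb hs)
    obtain ⟨r', hr'⟩ := hv _ (Set.mem_image_of_mem emb hq)
    simp only [emb, Prod.ext_iff, vadd_eq_add, Prod.fst_add, Prod.snd_add, Prod.smul_fst,
      Prod.smul_snd, smul_eq_mul] at hr hr'
    have : ((s.1 - p.1) * (q.2 - p.2) : ℝ) = (s.2 - p.2) * (q.1 - p.1) := by
      rw [hr.1, hr.2, hr'.1, hr'.2]
      ring
    simp only [Prod.fst_sub, Prod.snd_sub]
    exact_mod_cast this
  have hqp : 0 < (q - p).1.gcd (q - p).2 := by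
    rw [Int.gcd_pos_iff]
    by_contra! h0
    exact hpq (sub_eq_zero.1 (Prod.ext h0.1 h0.2)).symm
  obtain ⟨g, e₁, e₂, hg, he, h₁, h₂⟩ := Int.exists_gcd_one' hqp
  -- `(e₁, e₂)` is `q - p` divided by the gcd of its coordinates.
  refine ⟨(e₁, e₂), fun h0 => ?_, fun s hs => ?_⟩
  · simp only [Prod.mk_eq_zero] at h0
    exact hpq (sub_eq_zero.1 (Prod.ext (by simp [h₁, h0.1]) (by simp [h₂, h0.2]))).symm
  · obtain ⟨t, ht⟩ := exists_eq_zsmul_of_mul_eq_mul (e := (e₁, e₂)) (x := s - p)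
      (Int.isCoprime_iff_gcd_eq_one.2 he) (mul_right_cancel₀ (Int.natCast_ne_zero.2 hg.ne') (by
        simpa only [h₁, h₂, mul_assoc] using hcross s hs))
    exact ⟨t, eq_add_of_sub_eq' ht⟩

lemma IsLatticeConvex.add_zsmul_mem {S : Finset (ℤ × ℤ)} (hS : IsLatticeConvex S)
    {a e : ℤ × ℤ} {j k : ℤ} (ha : a ∈ S) (hk : a + k • e ∈ S) (hj : 0 ≤ j) (hjk : j ≤ k) :
    a + j • e ∈ S := by
  rcases hjk.eq_or_lt with rfl | hjk
  · exact hk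
  have hk0 : (0 : ℝ) < k := by exact_mod_cast hj.trans_lt hjk
  have key : emb (a + j • e) = emb a + ((j : ℝ) / k) • (emb (a + k • e) - emb a) := by
    simp only [emb, Prod.ext_iff, Prod.fst_add, Prod.snd_add, Prod.smul_fst, Prod.smul_snd,
      smul_eq_mul, Prod.fst_sub, Prod.snd_sub]
    push_cast
    constructor <;> field_simp <;> ring
  refine hS _ (key ▸ (convex_convexHull ℝ _).add_smul_sub_mem
    (subset_convexHull ℝ _ (Set.mem_image_of_mem emb ha))
    (subset_convexHull ℝ _ (Set.mem_image_of_mem emb hk)) ⟨by positivity, ?_⟩)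
  rw [div_le_one hk0]
  exact_mod_cast hjk.le

lemma IsLatticeConvex.exists_progression_subset_of_collinear {S : Finset (ℤ × ℤ)}
    (hS : IsLatticeConvex S) (hcol : Collinear ℝ (emb '' (S : Set (ℤ × ℤ))))
    (hcard : 2 ≤ S.card) :
    ∃ a e : ℤ × ℤ, e ≠ 0 ∧ ∀ i : Fin S.card, a + progression e S.card i ∈ S := by
  obtain ⟨p, hp, q, hq, hpq⟩ := Finset.one_lt_card.1 hcard
  obtain ⟨e, he, hline⟩ := exists_forall_eq_add_zsmul_of_collinear hcol hp hq hpq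
  set f : ℤ → ℤ × ℤ := fun t => p + t • e
  have hf : Injective f := fun t t' h => smul_left_injective ℤ he (add_left_cancel h)
  set I := S.preimage f hf.injOn
  have hI : I.Nonempty := ⟨0, by simpa [I, f] using hp⟩
  set m := I.min' hI
  set M := I.max' hI
  have hS_le : S.card ≤ (M + 1 - m).toNat := by
    calc S.card ≤ (I.image f).card := Finset.card_le_card fun s hs => by
          obtain ⟨t, rfl⟩ := hline s hs
          exact Finset.mem_image_of_mem f (Finset.mem_preimage.2 hs)
      _ ≤ I.card := Finset.card_image_le
      _ ≤ (Finset.Icc m M).card := Finset.card_le_card fun t ht =>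
          Finset.mem_Icc.2 ⟨I.min'_le t ht, I.le_max' t ht⟩
      _ = (M + 1 - m).toNat := Int.card_Icc m M
  have hm : f m ∈ S := Finset.mem_preimage.1 (I.min'_mem hI)
  have hM : f m + (M - m) • e ∈ S := by
    rw [show f m + (M - m) • e = f M by simp only [f]; module]
    exact Finset.mem_preimage.1 (I.max'_mem hI)
  refine ⟨f m, e, he, fun i => hS.add_zsmul_mem hm hM (Int.natCast_nonneg i) ?_⟩
  omega

section Main

variable {A : Type*} (η : ℤ × ℤ → A)

lemma shapeCount_progression_le_patternCount [Finite A] {S : Finset (ℤ × ℤ)} {a e : ℤ × ℤ}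
    {n : ℕ} (h : ∀ i : Fin n, a + progression e n i ∈ S) :
    shapeCount η (progression e n) ≤ patternCount η S := by
  rw [← shapeCount_const_add η a, patternCount_eq_shapeCount]
  exact shapeCount_comp_le η (fun s : S => (s : ℤ × ℤ)) fun i => ⟨_, h i⟩

variable [Fintype A]

theorem IsLatticeConvex.exists_periodic_of_collinear (hη : Surjective η) {S : Finset (ℤ × ℤ)}
    (hS : IsLatticeConvex S) (hcol : Collinear ℝ (emb '' (S : Set (ℤ × ℤ))))
    (hcard : 2 ≤ S.card) (h : patternCount η S + 2 ≤ S.card + Fintype.card A) :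
    ∃ p ≠ 0, Periodic η p := by
  obtain ⟨a, e, he, hae⟩ := hS.exists_progression_subset_of_collinear hcol hcard
  exact exists_periodic_of_shapeCount_progression_le η e hη he (by omega)
    ((Nat.add_le_add_right (shapeCount_progression_le_patternCount η hae) 2).trans h)

lemma two_le_card_of_patternCount_le (hη : Surjective η) {S : Finset (ℤ × ℤ)}
    (hne : S.Nonempty) (h : (patternCount η S : ℚ) ≤ 1 / 2 * S.card + Fintype.card A - 1) :
    2 ≤ S.card := by
  by_contra! hlt
  obtain ⟨g, rfl⟩ := (Finset.card_eq_one (s := S)).1 (by have := hne.card_pos; omega)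
  rw [patternCount_singleton η hη, Finset.card_singleton] at h
  linarith

lemma patternCount_erase_eq {S : Finset (ℤ × ℤ)} {g : ℤ × ℤ} {c : ℚ} (hg : g ∈ S)
    (hS : (patternCount η S : ℚ) ≤ 1 / 2 * S.card + c)
    (herase : 1 / 2 * (S.erase g).card + c < patternCount η (S.erase g)) :
    patternCount η (S.erase g) = patternCount η S := by
  rw [Finset.card_erase_of_mem hg, Nat.cast_pred (Finset.card_pos.2 ⟨g, hg⟩)] at herase
  have hlt : (patternCount η S : ℚ) < patternCount η (S.erase g) + 1 := by linarith
  have hle : patternCount η S ≤ patternCount η (S.erase g) :=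
    Nat.lt_add_one_iff.1 (by exact_mod_cast hlt)
  exact (patternCount_mono η (S.erase_subset g)).antisymm hle

end Main

theorem exists_mlc_generating_general
    {A : Type*} [Fintype A]
    (η : ℤ × ℤ → A) (hsurj : Function.Surjective η)
    (U : Finset (ℤ × ℤ)) (hUne : U.Nonempty) (hUconv : IsLatticeConvex U)
    (hU : (patternCount η U : ℚ) ≤ (1 / 2) * U.card + Fintype.card A - 1) :
    ∃ S : Finset (ℤ × ℤ), S ⊆ U ∧ IsLatticeConvex S ∧ S.Nonempty ∧ 2 ≤ S.card ∧
      (patternCount η S : ℚ) ≤ (1 / 2) * S.card + Fintype.card A - 1 ∧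
      (∀ T : Finset (ℤ × ℤ), T ⊆ S → IsLatticeConvex T → T.Nonempty →
        (patternCount η T : ℚ) ≤ (1 / 2) * T.card + Fintype.card A - 1 → T = S) ∧
      (∀ g ∈ S, IsLatticeConvex (S.erase g) →
        patternCount η S = patternCount η (S.erase g)) ∧
      ((¬ ∃ h : ℤ × ℤ, h ≠ 0 ∧ ∀ g : ℤ × ℤ, η (g + h) = η g) →
        ¬ Collinear ℝ (emb '' (S : Set (ℤ × ℤ)))) := by
  classical
  obtain ⟨S, hS, hmin⟩ := (U.powerset.filter fun T => IsLatticeConvex T ∧ T.Nonempty ∧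
      (patternCount η T : ℚ) ≤ 1 / 2 * T.card + Fintype.card A - 1).exists_min_image
    Finset.card ⟨U, Finset.mem_filter.2 ⟨Finset.mem_powerset_self U, hUconv, hUne, hU⟩⟩
  simp only [Finset.mem_filter, Finset.mem_powerset] at hS hmin
  obtain ⟨hSU, hSconv, hSne, hSbound⟩ := hS
  have hminimal : ∀ T ⊆ S, IsLatticeConvex T → T.Nonempty →
      (patternCount η T : ℚ) ≤ 1 / 2 * T.card + Fintype.card A - 1 → T = S :=
    fun T hTS hT hTne hTbound =>
      Finset.eq_of_subset_of_card_le hTS (hmin T ⟨hTS.trans hSU, hT, hTne, hTbound⟩)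
  have htwo := two_le_card_of_patternCount_le η hsurj hSne hSbound
  refine ⟨S, hSU, hSconv, hSne, htwo, hSbound, hminimal, fun g hg hconv => ?_,
    fun haper hcol => haper (hSconv.exists_periodic_of_collinear η hsurj hcol htwo ?_)⟩
  · refine (patternCount_erase_eq η hg (c := Fintype.card A - 1) (by linarith) ?_).symm
    by_contra! hle
    have hne : (S.erase g).Nonempty :=
      Finset.card_pos.1 (by rw [Finset.card_erase_of_mem hg]; omega)
    exact S.notMem_erase g ((hminimal _ (S.erase_subset g) hconv hne (by linarith)).symm ▸ hg)
  · have : (2 : ℚ) ≤ S.card := by exact_mod_cast htwo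
    have : (patternCount η S + 2 : ℚ) ≤ S.card + Fintype.card A := by linarith
    exact_mod_cast this

/-- Existence of mlc `η`-generating sets: a minimal convex subset `S ⊆ U` with
`P_η(S) ≤ (1/2)|S| + |A| - 1` exists, has at least two points, is `η`-generating, and,
if `η` is aperiodic, its convex hull has positive area (it is not collinear). -/
theorem exists_mlc_generating
    {A : Type*} [Fintype A] (hA : 2 ≤ Fintype.card A)
    (η : ℤ × ℤ → A) (hsurj : Function.Surjective η)
    (U : Finset (ℤ × ℤ)) (hUne : U.Nonempty) (hUconv : IsLatticeConvex U)
    (hU : (patternCount η U : ℚ) ≤ (1 / 2) * U.card + Fintype.card A - 1) :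
    ∃ S : Finset (ℤ × ℤ), S ⊆ U ∧ IsLatticeConvex S ∧ S.Nonempty ∧ 2 ≤ S.card ∧
      (patternCount η S : ℚ) ≤ (1 / 2) * S.card + Fintype.card A - 1 ∧
      (∀ T : Finset (ℤ × ℤ), T ⊆ S → IsLatticeConvex T → T.Nonempty →
        (patternCount η T : ℚ) ≤ (1 / 2) * T.card + Fintype.card A - 1 → T = S) ∧
      (∀ g ∈ S, IsLatticeConvex (S.erase g) →
        patternCount η S = patternCount η (S.erase g)) ∧
      ((¬ ∃ h : ℤ × ℤ, h ≠ 0 ∧ ∀ g : ℤ × ℤ, η (g + h) = η g) →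
        ¬ Collinear ℝ (emb '' (S : Set (ℤ × ℤ)))) :=
  exists_mlc_generating_general η hsurj U hUne hUconv hU
end

section
/- Let η : ℤ² → A whose range is A (|A| ≥ 2), and let S be an mlc η-generating set whose convex hull has positive area. If ℓ ∈ 𝔾₁ is a one-sided nonexpansive direction on X_η, then |ℓ_S ∩ S| ≥ 3. -/
/-- Cross product of lattice vectors; the half plane of the oriented line through the
origin with direction `v` is `{g : 0 ≤ cross v g}`. -/
def cross (v g : ℤ × ℤ) : ℤ := v.1 * g.2 - v.2 * g.1

/-!
Let `T` be the points of `S` strictly off the supporting line `ℓ_S`. If `T` is empty then `S`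
lies on `ℓ_S`, and a non-collinear set has at least three points. Otherwise `T` is a nonempty
proper convex subset of `S` (an open half plane meets the lattice-convex `S` in a lattice-convex
set), so minimality gives `P(T) > |T|/2 + |A| - 1`. Two points `x ≠ y` of `X_η` agreeing on a half
plane have a last line, parallel to `ℓ`, on which they differ; translating it onto `ℓ_S` gives two
distinct `S`-patterns with the same restriction to `T`, so `P(T) < P(S) ≤ |S|/2 + |A| - 1`. Hence
`|S \ T| > 2`.
-/

open Finset

theorem collinear_image_of_card_le_two {k V P ι : Type*} [DivisionRing k] [AddCommGroup V]
    [Module k V] [AddTorsor V P] (p : ι → P) (s : Finset ι) (hs : #s ≤ 2) :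
    Collinear k (p '' s) := by
  classical
  rcases s.eq_empty_or_nonempty with rfl | hne
  · simpa using collinear_empty k P
  rw [← coe_image]
  have := finiteDimensional_vectorSpan_of_finite k (s.image p).finite_toSet
  rw [collinear_iff_finrank_le_one]
  exact (finrank_vectorSpan_image_finset_le k p s (n := #s - 1) (by grind [hne.card_pos])).trans
    (by omega)

theorem cross_add (v a b : ℤ × ℤ) : cross v (a + b) = cross v a + cross v b := by
  simp only [cross, Prod.fst_add, Prod.snd_add]; ring

theorem cross_sub (v a b : ℤ × ℤ) : cross v (a - b) = cross v a - cross v b := by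
  simp only [cross, Prod.fst_sub, Prod.snd_sub]; ring

def crossₗ (v : ℤ × ℤ) : ℝ × ℝ →ₗ[ℝ] ℝ :=
  (v.1 : ℝ) • LinearMap.snd ℝ ℝ ℝ - (v.2 : ℝ) • LinearMap.fst ℝ ℝ ℝ

@[simp]
theorem crossₗ_emb (v g : ℤ × ℤ) : crossₗ v (emb g) = cross v g := by
  simp [crossₗ, emb, cross]

theorem lt_cross_of_mem_convexHull {T : Finset (ℤ × ℤ)} {v g : ℤ × ℤ} {c : ℤ}
    (hT : ∀ t ∈ T, c < cross v t) (hg : emb g ∈ convexHull ℝ (emb '' (T : Set (ℤ × ℤ)))) :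
    c < cross v g := by
  have hsub : emb '' (T : Set (ℤ × ℤ)) ⊆ {p | (c : ℝ) < crossₗ v p} := by
    rintro _ ⟨t, ht, rfl⟩
    simpa using hT t ht
  simpa using convexHull_min hsub (convex_halfSpace_gt (crossₗ v).isLinear _) hg

theorem IsLatticeConvex.filter_lt_cross {S : Finset (ℤ × ℤ)} (hS : IsLatticeConvex S)
    (v : ℤ × ℤ) (c : ℤ) : IsLatticeConvex (S.filter fun s => c < cross v s) := by
  intro g hg
  have hsub : (S.filter fun s => c < cross v s : Set (ℤ × ℤ)) ⊆ S :=
    coe_subset.mpr (filter_subset _ _)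
  exact mem_filter.mpr ⟨hS g (convexHull_mono (Set.image_mono hsub) hg),
    lt_cross_of_mem_convexHull (fun t ht => (mem_filter.mp ht).2) hg⟩

section Patterns

variable {A : Type*}

/-- Its closure in the product topology is the subshift `X_η`. -/
def shiftOrbit (η : ℤ × ℤ → A) : Set (ℤ × ℤ → A) :=
  {y | ∃ u : ℤ × ℤ, y = fun g => η (g + u)}

def patterns (η : ℤ × ℤ → A) (S : Finset (ℤ × ℤ)) : Set (↥S → A) :=
  {w | ∃ u : ℤ × ℤ, ∀ s : ↥S, w s = η (u + (s : ℤ × ℤ))}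

/-- The oriented line through the origin with direction `v` is one-sided nonexpansive on `X_η`. -/
def IsOneSidedNonexpansive [TopologicalSpace A] (η : ℤ × ℤ → A) (v : ℤ × ℤ) : Prop :=
  ∃ x ∈ closure (shiftOrbit η), ∃ y ∈ closure (shiftOrbit η),
    x ≠ y ∧ ∀ g : ℤ × ℤ, 0 ≤ cross v g → x g = y g

theorem exists_shift_eqOn_of_mem_closure [TopologicalSpace A] [DiscreteTopology A]
    {η x : ℤ × ℤ → A} (hx : x ∈ closure (shiftOrbit η)) (F : Finset (ℤ × ℤ)) :
    ∃ u, ∀ g ∈ F, x g = η (g + u) := by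
  have hU : IsOpen (⋂ g ∈ F, (fun z : ℤ × ℤ → A => z g) ⁻¹' {x g}) :=
    isOpen_biInter_finset fun g _ => (isOpen_discrete {x g}).preimage (continuous_apply g)
  obtain ⟨_, hz, u, rfl⟩ := mem_closure_iff.mp hx _ hU (by simp)
  exact ⟨u, fun g hg => (Set.mem_iInter₂.mp hz g hg).symm⟩

theorem translate_mem_patterns [TopologicalSpace A] [DiscreteTopology A]
    {η x : ℤ × ℤ → A} (hx : x ∈ closure (shiftOrbit η)) (S : Finset (ℤ × ℤ)) (u : ℤ × ℤ) :
    (fun s : ↥S => x (u + s)) ∈ patterns η S := by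
  obtain ⟨u', hu'⟩ := exists_shift_eqOn_of_mem_closure hx (S.image (u + ·))
  refine ⟨u' + u, fun s => ?_⟩
  dsimp only
  rw [hu' _ (mem_image_of_mem _ s.2)]
  abel_nf

theorem patternCount_lt_of_ne_of_eqOn [Finite A] {η : ℤ × ℤ → A} {S T : Finset (ℤ × ℤ)}
    (hTS : T ⊆ S) {w₁ w₂ : ↥S → A} (hw₁ : w₁ ∈ patterns η S) (hw₂ : w₂ ∈ patterns η S)
    (hne : w₁ ≠ w₂) (heq : ∀ t (ht : t ∈ T), w₁ ⟨t, hTS ht⟩ = w₂ ⟨t, hTS ht⟩) :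
    patternCount η T < patternCount η S := by
  let restrict : (↥S → A) → (↥T → A) := fun w t => w ⟨t, hTS t.2⟩
  have hsub : patterns η T ⊆ restrict '' patterns η S := by
    rintro _ ⟨u, hu⟩
    exact ⟨_, ⟨u, fun _ => rfl⟩, funext fun t => (hu t).symm⟩
  have hnotInj : ¬ Set.InjOn restrict (patterns η S) :=
    fun hinj => hne <| hinj hw₁ hw₂ <| funext fun t => heq t t.2
  calc patternCount η T = (patterns η T).ncard := rfl
    _ ≤ (restrict '' patterns η S).ncard := Set.ncard_le_ncard hsub
    _ < (patterns η S).ncard :=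
      lt_of_le_of_ne Set.ncard_image_le (mt (Set.ncard_image_iff).mp hnotInj)
    _ = patternCount η S := rfl

theorem exists_ne_forall_lt_cross_eq {x y : ℤ × ℤ → A} {v : ℤ × ℤ} (hxy : x ≠ y)
    (hagree : ∀ g, 0 ≤ cross v g → x g = y g) :
    ∃ g₁, x g₁ ≠ y g₁ ∧ ∀ g, cross v g₁ < cross v g → x g = y g := by
  obtain ⟨g, hg⟩ := Function.ne_iff.mp hxy
  obtain ⟨c, ⟨g₁, hg₁, rfl⟩, hmax⟩ :=
    Int.exists_greatest_of_bdd (P := fun c => ∃ g, x g ≠ y g ∧ cross v g = c)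
      ⟨0, by rintro _ ⟨g, hg, rfl⟩; by_contra! h; exact hg (hagree g h.le)⟩ ⟨_, g, hg, rfl⟩
  refine ⟨g₁, hg₁, fun g hlt => ?_⟩
  by_contra hg
  exact (hmax _ ⟨g, hg, rfl⟩).not_gt hlt

theorem IsOneSidedNonexpansive.patternCount_lt [TopologicalSpace A] [DiscreteTopology A]
    [Finite A] {η : ℤ × ℤ → A} {v : ℤ × ℤ} (hη : IsOneSidedNonexpansive η v)
    {S T : Finset (ℤ × ℤ)} (hTS : T ⊆ S) {g₀ : ℤ × ℤ} (hg₀ : g₀ ∈ S)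
    (hT : ∀ t ∈ T, cross v g₀ < cross v t) :
    patternCount η T < patternCount η S := by
  obtain ⟨x, hx, y, hy, hxy, hagree⟩ := hη
  obtain ⟨g₁, hg₁, hmax⟩ := exists_ne_forall_lt_cross_eq hxy hagree
  let u := g₁ - g₀
  refine patternCount_lt_of_ne_of_eqOn hTS (translate_mem_patterns hx S u)
    (translate_mem_patterns hy S u) (fun h => hg₁ ?_) fun t ht => hmax _ ?_
  · simpa [u] using congrFun h ⟨g₀, hg₀⟩
  · have := hT t ht
    simp only [u, cross_add, cross_sub]
    omega

end Patterns

theorem mlc_support_line_card_ge_three_general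
    {A : Type*} [Fintype A] [TopologicalSpace A] [DiscreteTopology A]
    (η : ℤ × ℤ → A)
    (S : Finset (ℤ × ℤ)) (hSconv : IsLatticeConvex S)
    (hmlc1 : (patternCount η S : ℚ) ≤ (1 / 2) * S.card + Fintype.card A - 1)
    (hmlc2 : ∀ T : Finset (ℤ × ℤ), T ⊆ S → T ≠ S → T.Nonempty → IsLatticeConvex T →
      ((1 : ℚ) / 2) * T.card + Fintype.card A - 1 < patternCount η T)
    (harea : ¬ Collinear ℝ (emb '' (S : Set (ℤ × ℤ))))
    (v : ℤ × ℤ)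
    (hnonexp : ∃ x ∈ closure {y : ℤ × ℤ → A | ∃ u : ℤ × ℤ, y = fun g => η (g + u)},
      ∃ y ∈ closure {y : ℤ × ℤ → A | ∃ u : ℤ × ℤ, y = fun g => η (g + u)},
        x ≠ y ∧ ∀ g : ℤ × ℤ, 0 ≤ cross v g → x g = y g)
    (g₀ : ℤ × ℤ) (hg₀ : g₀ ∈ S) (hsupp : ∀ s ∈ S, 0 ≤ cross v (s - g₀)) :
    3 ≤ (S.filter fun s => cross v (s - g₀) = 0).card := by
  set T := S.filter fun s => cross v g₀ < cross v s
  have hsplit : #(S.filter fun s => cross v (s - g₀) = 0) + #T = #S := by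
    rw [← card_filter_add_card_filter_not (s := S) fun s => cross v (s - g₀) = 0]
    congr 2
    refine filter_congr fun s hs => ?_
    have := hsupp s hs
    rw [cross_sub] at this ⊢
    omega
  rcases T.eq_empty_or_nonempty with hT | hT
  · simp only [hT, card_empty, add_zero] at hsplit
    by_contra! h
    exact harea (collinear_image_of_card_le_two emb S (by omega))
  have hTS : T ⊆ S := filter_subset _ S
  have hTS_ne : T ≠ S := fun h => by rw [← h] at hg₀; simp [T] at hg₀
  have hlower := hmlc2 T hTS hTS_ne hT (hSconv.filter_lt_cross v _)
  have hdrop : (patternCount η T : ℚ) + 1 ≤ patternCount η S := by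
    exact_mod_cast IsOneSidedNonexpansive.patternCount_lt hnonexp hTS hg₀
      fun t ht => (mem_filter.mp ht).2
  have hgap : (#T : ℚ) + 2 < #S := by linarith
  have : #T + 2 < #S := by exact_mod_cast hgap
  omega

/-- For an mlc `η`-generating set `S` of positive area and a one-sided nonexpansive
direction `ℓ` (of direction `v`) on `X_η`, the supporting line `ℓ_S` contains at least
three points of `S`. -/
theorem mlc_support_line_card_ge_three
    {A : Type*} [Fintype A] [TopologicalSpace A] [DiscreteTopology A]
    (hA : 2 ≤ Fintype.card A)
    (η : ℤ × ℤ → A) (hsurj : Function.Surjective η)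
    (S : Finset (ℤ × ℤ)) (hSne : S.Nonempty) (hSconv : IsLatticeConvex S)
    (hgen : ∀ g ∈ S, IsLatticeConvex (S.erase g) →
      patternCount η S = patternCount η (S.erase g))
    (hmlc1 : (patternCount η S : ℚ) ≤ (1 / 2) * S.card + Fintype.card A - 1)
    (hmlc2 : ∀ T : Finset (ℤ × ℤ), T ⊆ S → T ≠ S → T.Nonempty → IsLatticeConvex T →
      ((1 : ℚ) / 2) * T.card + Fintype.card A - 1 < patternCount η T)
    (harea : ¬ Collinear ℝ (emb '' (S : Set (ℤ × ℤ))))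
    (v : ℤ × ℤ) (hv : v ≠ 0)
    (hnonexp : ∃ x ∈ closure {y : ℤ × ℤ → A | ∃ u : ℤ × ℤ, y = fun g => η (g + u)},
      ∃ y ∈ closure {y : ℤ × ℤ → A | ∃ u : ℤ × ℤ, y = fun g => η (g + u)},
        x ≠ y ∧ ∀ g : ℤ × ℤ, 0 ≤ cross v g → x g = y g)
    (g₀ : ℤ × ℤ) (hg₀ : g₀ ∈ S) (hsupp : ∀ s ∈ S, 0 ≤ cross v (s - g₀)) :
    3 ≤ (S.filter fun s => cross v (s - g₀) = 0).card :=
  mlc_support_line_card_ge_three_general η S hSconv hmlc1 hmlc2 harea v hnonexp g₀ hg₀ hsupp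
end
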